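/- In the chain decomposition of a 2-edge-connected graph G, every chain C other than the first has a parent chain p(C) (the chain to which t(C) s-belongs), and s(p(C)) is an ancestor of s(C); moreover the parent chain is created earlier than C in the decomposition order. -/
import Mathlib


open SimpleGraph

variable {V : Type*} [Fintype V] [DecidableEq V]

/-- `G` is `k`-edge-connected. -/
def EdgeConnGE (G : SimpleGraph V) (k : ℕ) : Prop :=
  2 ≤ Fintype.card V ∧ ∀ S : Finset (Sym2 V), S.card < k → (G.deleteEdges ↑S).Connected

/-- A DFS tree of `G`: a rooted spanning tree (given by a parent function) whose
tree edges are edges of `G` and such that every edge of `G` joins two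
ancestor-comparable vertices. -/
structure DFSTree (G : SimpleGraph V) where
  root : V
  parent : V → V
  parent_root : parent root = root
  parent_adj : ∀ v, v ≠ root → G.Adj v (parent v)
  reaches_root : ∀ v, ∃ n, parent^[n] v = root
  dfs_edge : ∀ u v, G.Adj u v → (∃ n, parent^[n] v = u) ∨ (∃ n, parent^[n] u = v)

/-- `a` is an ancestor of `b` in the DFS tree (possibly `a = b`). -/
def DFSTree.Anc {G : SimpleGraph V} (t : DFSTree G) (a b : V) : Prop :=
  ∃ n, t.parent^[n] b = a

/-- `e` is a tree edge of the DFS tree. -/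
def DFSTree.TreeEdge {G : SimpleGraph V} (t : DFSTree G) (e : Sym2 V) : Prop :=
  ∃ v, v ≠ t.root ∧ e = s(v, t.parent v)

/-- A 2-edge-cut: two distinct edges of `G` whose removal disconnects `G`. -/
def Is2EdgeCut (G : SimpleGraph V) (e₁ e₂ : Sym2 V) : Prop :=
  e₁ ∈ G.edgeSet ∧ e₂ ∈ G.edgeSet ∧ e₁ ≠ e₂ ∧ ¬ (G.deleteEdges {e₁, e₂}).Connected


/-- A chain decomposition of `G` with respect to the DFS tree `t`.

Vertices are processed in DFS order (recorded by the numbering `num`); when a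
vertex `v = src i` is processed, each back-edge `s(src i, low i)` starting at it
generates the chain `Cᵢ`, which consists of this back-edge together with the
tree path from `low i` upward until the first already visited vertex `tgt i`.
A vertex counts as visited (just before chain `i` is built) if its DFS number
is at most that of `src i`, or if it lies on an earlier chain `Cⱼ`, `j < i`
(i.e. it equals `src j` or lies on the tree path from `low j` up to `tgt j`). -/
structure ChainDecomp (G : SimpleGraph V) (t : DFSTree G) where
  /-- the DFS (discovery) numbering of the vertices -/
  num : V → ℕ
  num_inj : Function.Injective num
  num_parent : ∀ v, v ≠ t.root → num (t.parent v) < num v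
  /-- number of chains -/
  k : ℕ
  /-- `src i = s(Cᵢ)`, the source (upper endpoint of the back-edge) of chain `i` -/
  src : Fin k → V
  /-- `low i`, the lower endpoint of the back-edge of chain `i` -/
  low : Fin k → V
  /-- `tgt i = t(Cᵢ)`, the target of chain `i` -/
  tgt : Fin k → V
  back_adj : ∀ i, G.Adj (src i) (low i)
  back_anc : ∀ i, t.Anc (src i) (low i)
  back_nontree : ∀ i, ¬ t.TreeEdge s(src i, low i)
  /-- distinct chains come from distinct back-edges -/
  back_inj : ∀ i j, s(src i, low i) = s(src j, low j) → i = j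
  /-- every back-edge of `G` generates a chain -/
  back_surj : ∀ e ∈ G.edgeSet, ¬ t.TreeEdge e → ∃ i, e = s(src i, low i)
  /-- chains are generated in DFS order of their sources -/
  ordered : ∀ i j : Fin k, i ≤ j → num (src i) ≤ num (src j)
  /-- the target lies on the tree path from `low i` to the root -/
  tgt_anc : ∀ i, t.Anc (tgt i) (low i)
  /-- the target is visited when chain `i` is built -/
  tgt_visited : ∀ i : Fin k,
    num (tgt i) ≤ num (src i) ∨
    ∃ j : Fin k, j < i ∧
      (tgt i = src j ∨ (t.Anc (tgt j) (tgt i) ∧ t.Anc (tgt i) (low j)))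
  /-- the target is the *first* visited vertex on the way up: no vertex strictly
  between `low i` and `tgt i` is visited when chain `i` is built -/
  path_unvisited : ∀ i : Fin k, ∀ u : V,
    t.Anc (tgt i) u → t.Anc u (low i) → u ≠ tgt i →
    num (src i) < num u ∧
    ∀ j : Fin k, j < i →
      ¬ (u = src j ∨ (t.Anc (tgt j) u ∧ t.Anc u (low j)))

/-- The edges of chain `i`: its back-edge together with the tree edges on the
tree path from `low i` up to `tgt i`. -/
def ChainDecomp.chainEdges {G : SimpleGraph V} {t : DFSTree G}
    (cd : ChainDecomp G t) (i : Fin cd.k) : Set (Sym2 V) :=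
  {s(cd.src i, cd.low i)} ∪
  {e | ∃ u : V, u ≠ cd.tgt i ∧ t.Anc (cd.tgt i) u ∧ t.Anc u (cd.low i) ∧
    e = s(u, t.parent u)}

/-- Vertex `v` s-belongs to chain `i`: either `v` is the root and `i` is the
first chain, or the tree edge from `v` to its parent lies on chain `i`. -/
def ChainDecomp.SBelongs {G : SimpleGraph V} {t : DFSTree G}
    (cd : ChainDecomp G t) (v : V) (i : Fin cd.k) : Prop :=
  (v = t.root ∧ (i : ℕ) = 0) ∨
  (v ≠ t.root ∧ s(v, t.parent v) ∈ cd.chainEdges i)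

set_option linter.unusedSectionVars false

namespace DFSTree

variable {G : SimpleGraph V} (t : DFSTree G)

lemma anc_refl (a : V) : t.Anc a a := ⟨0, rfl⟩

lemma anc_trans {a b c : V} (h1 : t.Anc a b) (h2 : t.Anc b c) : t.Anc a c := by
  obtain ⟨m, hm⟩ := h1
  obtain ⟨n, hn⟩ := h2
  exact ⟨m + n, by rw [Function.iterate_add_apply, hn, hm]⟩

lemma iterate_root (n : ℕ) : t.parent^[n] t.root = t.root := by
  induction n with
  | zero => rfl
  | succ n ih => rw [Function.iterate_succ_apply, t.parent_root, ih]

lemma anc_root (b : V) : t.Anc t.root b := t.reaches_root b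

lemma anc_parent (b : V) : t.Anc (t.parent b) b := ⟨1, rfl⟩

lemma anc_parent_of_ne {a v : V} (h : t.Anc a v) (hne : a ≠ v) :
    t.Anc a (t.parent v) := by
  obtain ⟨n, hn⟩ := h
  cases n with
  | zero => exact absurd hn.symm hne
  | succ n => exact ⟨n, by rwa [Function.iterate_succ_apply] at hn⟩

lemma anc_comp {a b c : V} (ha : t.Anc a c) (hb : t.Anc b c) :
    t.Anc a b ∨ t.Anc b a := by
  obtain ⟨m, hm⟩ := ha
  obtain ⟨n, hn⟩ := hb
  rcases le_total m n with h | h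
  · exact Or.inr ⟨n - m, by
      rw [← hm, ← Function.iterate_add_apply, Nat.sub_add_cancel h, hn]⟩
  · exact Or.inl ⟨m - n, by
      rw [← hn, ← Function.iterate_add_apply, Nat.sub_add_cancel h, hm]⟩

end DFSTree

namespace ChainDecomp

variable {G : SimpleGraph V} {t : DFSTree G}

lemma anc_eq_or_num_lt (cd : ChainDecomp G t) {a b : V} (h : t.Anc a b) :
    a = b ∨ cd.num a < cd.num b := by
  obtain ⟨n, hn⟩ := h
  induction n generalizing b with
  | zero => exact Or.inl hn.symm
  | succ n ih =>
    rw [Function.iterate_succ_apply] at hn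
    by_cases hb : b = t.root
    · subst hb
      rw [t.parent_root, t.iterate_root] at hn
      exact Or.inl hn.symm
    · have hlt := cd.num_parent b hb
      rcases ih hn with h | h
      · exact Or.inr (h ▸ hlt)
      · exact Or.inr (h.trans hlt)

lemma anc_num_le (cd : ChainDecomp G t) {a b : V} (h : t.Anc a b) :
    cd.num a ≤ cd.num b := by
  rcases cd.anc_eq_or_num_lt h with h | h
  · exact h ▸ le_rfl
  · exact h.le

lemma anc_num_lt (cd : ChainDecomp G t) {a b : V} (h : t.Anc a b) (hne : a ≠ b) :
    cd.num a < cd.num b := by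
  rcases cd.anc_eq_or_num_lt h with h | h
  · exact absurd h hne
  · exact h

lemma anc_antisymm (cd : ChainDecomp G t) {a b : V} (h1 : t.Anc a b)
    (h2 : t.Anc b a) : a = b := by
  rcases cd.anc_eq_or_num_lt h1 with h | h
  · exact h
  · exact absurd (cd.anc_num_le h2) (not_le.mpr h)

lemma eq_root_of_anc_root (cd : ChainDecomp G t) {a : V}
    (h : t.Anc a t.root) : a = t.root :=
  cd.anc_antisymm h (t.anc_root a)

lemma num_root_le (cd : ChainDecomp G t) (v : V) :
    cd.num t.root ≤ cd.num v :=
  cd.anc_num_le (t.anc_root v)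

lemma lt_of_num_lt (cd : ChainDecomp G t) {a b : Fin cd.k}
    (h : cd.num (cd.src a) < cd.num (cd.src b)) : a < b := by
  by_contra hc
  exact absurd (cd.ordered b a (not_lt.mp hc)) (not_le.mpr h)

lemma src_anc_tgt (cd : ChainDecomp G t) (j : Fin cd.k) :
    t.Anc (cd.src j) (cd.tgt j) := by
  rcases t.anc_comp (cd.back_anc j) (cd.tgt_anc j) with h | h
  · exact h
  · by_cases he : cd.src j = cd.tgt j
    · exact he ▸ t.anc_refl _
    · exact absurd (cd.path_unvisited j (cd.src j) h (cd.back_anc j) he).1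
        (lt_irrefl _)

lemma walk_cross {H : SimpleGraph V} {D : Set V} :
    ∀ {a b : V}, H.Walk a b → a ∈ D → b ∉ D →
      ∃ x y, x ∈ D ∧ y ∉ D ∧ H.Adj x y := by
  intro a b p
  induction p with
  | nil => exact fun ha hb => absurd ha hb
  | @cons u c w h p ih =>
    intro ha hb
    by_cases hc : c ∈ D
    · exact ih hc hb
    · exact ⟨u, c, ha, hc, h⟩

/-- 2-edge-connectivity: every tree edge is spanned by some back edge. -/
lemma spans (cd : ChainDecomp G t) (h2 : EdgeConnGE G 2) (v : V)
    (hv : v ≠ t.root) :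
    ∃ j : Fin cd.k, t.Anc (cd.src j) (t.parent v) ∧ t.Anc v (cd.low j) := by
  set e : Sym2 V := s(v, t.parent v) with he
  have hconn : (G.deleteEdges ({e} : Set (Sym2 V))).Connected := by
    have := h2.2 {e} (by simp)
    simpa using this
  set D : Set V := {x | t.Anc v x} with hD
  have hroot : t.root ∉ D := fun h => hv (cd.eq_root_of_anc_root h)
  obtain ⟨p⟩ := hconn.preconnected v t.root
  have hvD : v ∈ D := by rw [hD]; exact t.anc_refl v
  obtain ⟨x, y, hx, hy, hxy⟩ := walk_cross p hvD hroot
  rw [SimpleGraph.deleteEdges_adj] at hxy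
  obtain ⟨hadj, hne⟩ := hxy
  have hnee : s(x, y) ≠ e := by simpa using hne
  -- y is a proper ancestor of v, x is a descendant of v
  have hyx : t.Anc y x := by
    rcases t.dfs_edge x y hadj with h | h
    · exact absurd (t.anc_trans hx h) hy
    · exact h
  have hyv : t.Anc y v := by
    rcases t.anc_comp hyx hx with h | h
    · exact h
    · exact absurd h hy
  have hyv' : y ≠ v := fun h => hy (h ▸ t.anc_refl v)
  have hypv : t.Anc y (t.parent v) := t.anc_parent_of_ne hyv hyv'
  -- s(x,y) is not a tree edge
  have hnt : ¬ t.TreeEdge s(x, y) := by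
    rintro ⟨u, hu, hequ⟩
    rw [Sym2.eq_iff] at hequ
    rcases hequ with ⟨hxu, hyu⟩ | ⟨hxu, hyu⟩
    · subst hxu
      by_cases hxv : x = v
      · exact hnee (by rw [hyu, hxv])
      · have hvpx : t.Anc v (t.parent x) :=
          t.anc_parent_of_ne hx (fun h => hxv h.symm)
        rw [← hyu] at hvpx
        exact hy hvpx
    · have hxy' : t.Anc x y := by
        rw [hxu, hyu]; exact t.anc_parent u
      exact hadj.ne (cd.anc_antisymm hxy' hyx)
  obtain ⟨j, hj⟩ := cd.back_surj s(x, y) ((SimpleGraph.mem_edgeSet G).mpr hadj) hnt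
  rw [Sym2.eq_iff] at hj
  rcases hj with ⟨hxs, hyl⟩ | ⟨hxl, hys⟩
  · have hxy' : t.Anc x y := by
      rw [hxs, hyl]; exact cd.back_anc j
    exact absurd (cd.anc_antisymm hxy' hyx) hadj.ne
  · exact ⟨j, by rw [← hys]; exact hypv, by rw [← hxl]; exact hx⟩

/-- Covering lemma: if the tree edge from `v` to its parent is spanned by the
back edge of chain `j`, then `v` lies on the path of some chain `j' ≤ j`. -/
lemma covering (cd : ChainDecomp G t) : ∀ n : ℕ, ∀ j : Fin cd.k, (j : ℕ) = n →
    ∀ v : V, v ≠ t.root → t.Anc (cd.src j) (t.parent v) → t.Anc v (cd.low j) →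
    ∃ j' : Fin cd.k, j' ≤ j ∧ v ≠ cd.tgt j' ∧ t.Anc (cd.tgt j') v ∧
      t.Anc v (cd.low j') := by
  intro n
  induction n using Nat.strong_induction_on with
  | _ n ih =>
  intro j hj v hv hs hl
  have hpv : cd.num (cd.src j) ≤ cd.num (t.parent v) := cd.anc_num_le hs
  have hpvv : cd.num (t.parent v) < cd.num v := cd.num_parent v hv
  by_cases heq : cd.tgt j = v
  · -- v = tgt j
    rcases cd.tgt_visited j with hnum | ⟨j₂, hj₂lt, hcase⟩
    · rw [heq] at hnum; omega
    · have hj₂n : (j₂ : ℕ) < n := by rw [← hj]; exact hj₂lt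
      rcases hcase with hcase | ⟨h21, h22⟩
      · -- tgt j = src j₂, i.e. v = src j₂
        have h1 : cd.num (cd.src j₂) ≤ cd.num (cd.src j) :=
          cd.ordered j₂ j hj₂lt.le
        rw [← hcase, heq] at h1
        omega
      · rw [heq] at h21 h22
        by_cases hvt2 : cd.tgt j₂ = v
        · have hs2v : t.Anc (cd.src j₂) v := hvt2 ▸ cd.src_anc_tgt j₂
          by_cases hsv : cd.src j₂ = v
          · have h1 : cd.num (cd.src j₂) ≤ cd.num (cd.src j) :=
              cd.ordered j₂ j hj₂lt.le
            rw [hsv] at h1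
            omega
          · have hsp : t.Anc (cd.src j₂) (t.parent v) :=
              t.anc_parent_of_ne hs2v hsv
            obtain ⟨j', hle, h'⟩ := ih j₂.val hj₂n j₂ rfl v hv hsp h22
            exact ⟨j', hle.trans hj₂lt.le, h'⟩
        · exact ⟨j₂, hj₂lt.le, fun h => hvt2 h.symm, h21, h22⟩
  · rcases t.anc_comp (cd.tgt_anc j) hl with h1 | h1
    · exact ⟨j, le_rfl, fun h => heq h.symm, h1, hl⟩
    · -- v is a strict ancestor of tgt j
      have hvt : cd.num v < cd.num (cd.tgt j) :=
        cd.anc_num_lt h1 (fun h => heq h.symm)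
      rcases cd.tgt_visited j with hnum | ⟨j₂, hj₂lt, hcase⟩
      · omega
      · have hj₂n : (j₂ : ℕ) < n := by rw [← hj]; exact hj₂lt
        rcases hcase with hcase | ⟨h21, h22⟩
        · have hn1 : cd.num (cd.src j₂) ≤ cd.num (cd.src j) :=
            cd.ordered j₂ j hj₂lt.le
          rw [← hcase] at hn1
          omega
        · have hvl2 : t.Anc v (cd.low j₂) := t.anc_trans h1 h22
          have ha : t.Anc (cd.src j₂) (cd.tgt j) :=
            t.anc_trans (cd.src_anc_tgt j₂) h21
          have hb : t.Anc (t.parent v) (cd.tgt j) :=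
            t.anc_trans (t.anc_parent v) h1
          have hrec : t.Anc (cd.src j₂) (t.parent v) →
              ∃ j' : Fin cd.k, j' ≤ j ∧ v ≠ cd.tgt j' ∧ t.Anc (cd.tgt j') v ∧
                t.Anc v (cd.low j') := fun hsp => by
            obtain ⟨j', hle, h'⟩ := ih j₂.val hj₂n j₂ rfl v hv hsp hvl2
            exact ⟨j', hle.trans hj₂lt.le, h'⟩
          rcases t.anc_comp ha hb with hc | hc
          · exact hrec hc
          · have h1' : cd.num (t.parent v) ≤ cd.num (cd.src j₂) :=
              cd.anc_num_le hc
            have h2' : cd.num (cd.src j₂) ≤ cd.num (cd.src j) :=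
              cd.ordered j₂ j hj₂lt.le
            have heq' : cd.src j₂ = t.parent v :=
              cd.num_inj (le_antisymm (h2'.trans hpv) h1')
            exact hrec (heq' ▸ t.anc_refl _)

lemma src_zero (cd : ChainDecomp G t) (h2 : EdgeConnGE G 2) (hk : 0 < cd.k) :
    cd.src ⟨0, hk⟩ = t.root := by
  have hcard : 2 ≤ Fintype.card V := h2.1
  -- there is a child of the root
  have key : ∀ n : ℕ, ∀ v : V, v ≠ t.root → t.parent^[n] v = t.root →
      ∃ c : V, c ≠ t.root ∧ t.parent c = t.root := by
    intro n
    induction n with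
    | zero => exact fun v hv hn => absurd hn hv
    | succ n ihn =>
      intro v hv hn
      rw [Function.iterate_succ_apply] at hn
      by_cases hp : t.parent v = t.root
      · exact ⟨v, hv, hp⟩
      · exact ihn _ hp hn
  obtain ⟨v, hv⟩ : ∃ v : V, v ≠ t.root :=
    Fintype.exists_ne_of_one_lt_card (by omega) t.root
  obtain ⟨n, hn⟩ := t.reaches_root v
  obtain ⟨c, hc, hpc⟩ := key n v hv hn
  obtain ⟨j, hjs, -⟩ := cd.spans h2 c hc
  rw [hpc] at hjs
  have hjr : cd.src j = t.root := cd.eq_root_of_anc_root hjs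
  have h1 : cd.num (cd.src ⟨0, hk⟩) ≤ cd.num (cd.src j) :=
    cd.ordered _ _ (Fin.le_def.mpr (Nat.zero_le _))
  rw [hjr] at h1
  exact cd.num_inj (le_antisymm h1 (cd.num_root_le _))

end ChainDecomp

/-- In the chain decomposition of a 2-edge-connected graph, every chain `Cᵢ`
other than the first has a parent chain `Cⱼ` (the chain to which `t(Cᵢ)`
s-belongs); moreover `s(Cⱼ)` is an ancestor of `s(Cᵢ)` and `Cⱼ` was created
earlier than `Cᵢ`. -/
theorem stmt_17 (G : SimpleGraph V) (t : DFSTree G) (cd : ChainDecomp G t)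
    (h2 : EdgeConnGE G 2) (i : Fin cd.k) (hi : (i : ℕ) ≠ 0) :
    ∃ j : Fin cd.k, cd.SBelongs (cd.tgt i) j ∧
      t.Anc (cd.src j) (cd.src i) ∧ j < i := by
  by_cases hw : cd.tgt i = t.root
  · refine ⟨⟨0, i.pos⟩, Or.inl ⟨hw, rfl⟩, ?_, ?_⟩
    · rw [cd.src_zero h2 i.pos]
      exact t.anc_root _
    · exact Fin.lt_def.mpr (Nat.pos_of_ne_zero hi)
  · obtain ⟨j0, hs0, hl0⟩ := cd.spans h2 (cd.tgt i) hw
    obtain ⟨j', -, hne', h1', h2'⟩ :=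
      cd.covering j0.val j0 rfl (cd.tgt i) hw hs0 hl0
    have hsb : cd.SBelongs (cd.tgt i) j' :=
      Or.inr ⟨hw, Or.inr ⟨cd.tgt i, hne', h1', h2', rfl⟩⟩
    have hnum1 : cd.num (cd.src j') < cd.num (cd.tgt i) :=
      lt_of_le_of_lt (cd.anc_num_le (cd.src_anc_tgt j'))
        (cd.anc_num_lt h1' (fun h => hne' h.symm))
    have hj'i : j' < i := by
      rcases cd.tgt_visited i with hnum | ⟨j₂, hj₂, hcase⟩
      · exact cd.lt_of_num_lt (lt_of_lt_of_le hnum1 hnum)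
      · rcases hcase with hcase | ⟨h21, h22⟩
        · have : cd.num (cd.src j₂) ≤ cd.num (cd.src i) :=
            cd.ordered j₂ i hj₂.le
          rw [← hcase] at this
          exact cd.lt_of_num_lt (lt_of_lt_of_le hnum1 this)
        · have hnlt : ¬ (j₂ < j') := fun hlt =>
            (cd.path_unvisited j' (cd.tgt i) h1' h2' hne').2 j₂ hlt
              (Or.inr ⟨h21, h22⟩)
          exact lt_of_le_of_lt (not_lt.mp hnlt) hj₂
    refine ⟨j', hsb, ?_, hj'i⟩
    have hsw : t.Anc (cd.src j') (cd.tgt i) :=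
      t.anc_trans (cd.src_anc_tgt j') h1'
    rcases t.anc_comp hsw (cd.src_anc_tgt i) with hc | hc
    · exact hc
    · have h1 : cd.num (cd.src i) ≤ cd.num (cd.src j') := cd.anc_num_le hc
      have h2n : cd.num (cd.src j') ≤ cd.num (cd.src i) :=
        cd.ordered j' i hj'i.le
      have : cd.src j' = cd.src i := cd.num_inj (le_antisymm h2n h1)
      exact this ▸ t.anc_refl _
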